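/- arXiv:1401.4851 — 2 statements merged into one kernel-verified Lean document; each statement's English description precedes it below -/
import Mathlib

section
/- Let k ≥ 2 and let H be a k-uniform hypergraph on n vertices with m edges in which every vertex has degree 1 or 2. Then the number of vertices of H of degree 2 equals k·m − n, and consequently τ(H) ≤ m − (k·m − n)/⌊3k/2⌋ = (n + ⌊k/2⌋·m)/⌊3k/2⌋ when k is even, and the same bound τ(H) ≤ (n + ⌊k/2⌋·m)/⌊3k/2⌋ holds when k is odd. -/
/-- A hypergraph: a finite vertex set together with a finite (indexed, hence
multiset-like) family of edges, each edge a subset of the vertex set. -/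
structure FinHypergraph (V : Type*) where
  verts : Finset V
  numEdges : ℕ
  edge : Fin numEdges → Finset V
  edge_sub : ∀ i, edge i ⊆ verts

namespace FinHypergraph

variable {V : Type*} [DecidableEq V]

/-- `H` is `k`-uniform if every edge has exactly `k` vertices. -/
def Uniform (H : FinHypergraph V) (k : ℕ) : Prop :=
  ∀ i, (H.edge i).card = k

/-- A transversal: a set of vertices meeting every edge. -/
def IsTransversal (H : FinHypergraph V) (T : Finset V) : Prop :=
  T ⊆ H.verts ∧ ∀ i, (T ∩ H.edge i).Nonempty

/-- The transversal number `τ(H)`: minimum size of a transversal. -/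
noncomputable def tau (H : FinHypergraph V) : ℕ :=
  sInf {n | ∃ T : Finset V, H.IsTransversal T ∧ T.card = n}

/-- The degree of a vertex: the number of edges containing it. -/
def degree (H : FinHypergraph V) (v : V) : ℕ :=
  (Finset.univ.filter fun i => v ∈ H.edge i).card

/-- Two vertices are adjacent if some edge contains both. -/
def Adj (H : FinHypergraph V) (u v : V) : Prop :=
  u ≠ v ∧ ∃ i, u ∈ H.edge i ∧ v ∈ H.edge i

/-- `H` is connected if every pair of vertices is joined by a sequence of
consecutively adjacent vertices. -/
def Connected (H : FinHypergraph V) : Prop :=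
  ∀ u ∈ H.verts, ∀ v ∈ H.verts, Relation.ReflTransGen H.Adj u v

/-- `H` is (a copy of) `E_k`: `k` vertices and exactly one edge. -/
def IsEk (H : FinHypergraph V) (k : ℕ) : Prop :=
  H.verts.card = k ∧ H.numEdges = 1 ∧ ∀ i, H.edge i = H.verts

/-- `H` is (a copy of) the generalized triangle `T_k`: the vertex set is the
disjoint union of sets `A`, `B`, `C`, `D` with `|A| = ⌈k/2⌉`,
`|B| = |C| = ⌊k/2⌋`, `|D| = ⌈k/2⌉ - ⌊k/2⌋`, and the edges are exactly
`A ∪ B`, `A ∪ C` and `B ∪ C ∪ D`. -/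
def IsTk (H : FinHypergraph V) (k : ℕ) : Prop :=
  ∃ A B C D : Finset V,
    A.card = (k + 1) / 2 ∧ B.card = k / 2 ∧ C.card = k / 2 ∧
    D.card = (k + 1) / 2 - k / 2 ∧
    Disjoint A B ∧ Disjoint A C ∧ Disjoint A D ∧
    Disjoint B C ∧ Disjoint B D ∧ Disjoint C D ∧
    H.verts = A ∪ B ∪ C ∪ D ∧
    H.numEdges = 3 ∧
    (List.ofFn H.edge : Multiset (Finset V)) = {A ∪ B, A ∪ C, B ∪ C ∪ D}

end FinHypergraph

/-!
The vertices of degree two are the edges of a loopless multigraph `G` on the `m` hyperedges, each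
joining the two hyperedges containing it; `G` has maximum degree at most `k`, and counting
incidences gives `|E(G)| = km - n`. A matching `M` of `G` yields a transversal of size `m - |M|`:
its vertices, plus one vertex in every hyperedge they miss. So it suffices that `G` has a matching
with `|E(G)| ≤ ⌊3k/2⌋ · |M|`, the bound that Shannon's theorem on the chromatic index implies.

Take `M` maximum and charge every edge of `G` to the edges of `M` at its covered ends, twice if
only one end is covered. Since there is no augmenting path, the edges from `s = uv ∈ M` to free
vertices share an end, so the charge (`load`) of `s` is at most `3k`. For odd `k`, load `3k` forces
a triangle `uvx` with free apex `x` and, by parity, an edge from `s` to some other `f ∈ M`; further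
augmenting paths show that such an `f` has load at most `3k - 1` minus the number of these `s`
joined to it.
-/

open Finset Function

/-- A loopless multigraph: edges are labelled by `E`, so parallel edges are allowed. -/
structure FinMultigraph (V E : Type*) where
  edges : Finset E
  ends : E → Finset V
  card_ends : ∀ e ∈ edges, (ends e).card = 2

namespace FinMultigraph

variable {V E : Type*} (G : FinMultigraph V E)

def IsMatching (S : Finset E) : Prop := S ⊆ G.edges ∧ (S : Set E).PairwiseDisjoint G.ends

def IsMaximumMatching (S : Finset E) : Prop :=
  G.IsMatching S ∧ ∀ T, G.IsMatching T → T.card ≤ S.card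

variable {G}

theorem ends_nonempty {e : E} (he : e ∈ G.edges) : (G.ends e).Nonempty :=
  card_pos.mp (by rw [G.card_ends e he]; norm_num)

theorem ne_of_disjoint_ends {e e' : E} (he : e ∈ G.edges) (h : Disjoint (G.ends e) (G.ends e')) :
    e ≠ e' := by
  rintro rfl
  exact (ends_nonempty he).ne_empty (disjoint_self.mp h)

theorem exists_isMaximumMatching : ∃ S, G.IsMaximumMatching S := by
  classical
  obtain ⟨S, hS, hmax⟩ := exists_max_image
    (G.edges.powerset.filter fun S : Finset E => (S : Set E).PairwiseDisjoint G.ends) card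
    ⟨∅, by simp⟩
  simp only [mem_filter, mem_powerset] at hS hmax
  exact ⟨S, hS, fun T hT => hmax T hT⟩

theorem IsMatching.eq_of_mem_ends {S : Finset E} (hS : G.IsMatching S) {s t : E} (hs : s ∈ S)
    (ht : t ∈ S) {v : V} (hvs : v ∈ G.ends s) (hvt : v ∈ G.ends t) : s = t :=
  hS.2.elim_finset hs ht v hvs hvt

theorem IsMaximumMatching.card_le_of_exchange [DecidableEq E] {S P F : Finset E}
    (hS : G.IsMaximumMatching S) (hP : P ⊆ S) (hF : G.IsMatching F)
    (hFS : ∀ e ∈ F, ∀ s ∈ S \ P, Disjoint (G.ends e) (G.ends s)) : F.card ≤ P.card := by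
  have hdisj : Disjoint (S \ P) F :=
    disjoint_left.mpr fun e heS heF => ne_of_disjoint_ends (hF.1 heF) (hFS e heF e heS) rfl
  have hmatch : G.IsMatching (S \ P ∪ F) := by
    refine ⟨union_subset (sdiff_subset.trans hS.1.1) hF.1, ?_⟩
    rw [coe_union]
    exact (hS.1.2.subset (by simp)).union hF.2 fun e he e' he' _ => (hFS e' he' e he).symm
  have := hS.2 _ hmatch
  rw [card_union_of_disjoint hdisj, card_sdiff_of_subset hP] at this
  have := card_le_card hP
  omega

variable [DecidableEq V]

variable (G)

def edgesAt (v : V) : Finset E := G.edges.filter (v ∈ G.ends ·)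

def degree (v : V) : ℕ := (G.edgesAt v).card

def matched (S : Finset E) : Finset V := S.biUnion G.ends

def outEdges (S : Finset E) (s : E) : Finset E :=
  G.edges.filter fun e => ¬Disjoint (G.ends e) (G.ends s) ∧ ¬G.ends e ⊆ G.matched S

def load (S : Finset E) (s : E) : ℕ := ∑ v ∈ G.ends s, G.degree v + (G.outEdges S s).card

def Adj (x y : V) : Prop := ∃ e ∈ G.edges, G.ends e = {x, y}

def IsJoinedTo (w : V) (s : E) : Prop := ∃ a ∈ G.ends s, G.Adj w a

open Classical in
noncomputable def saturatedNbrs (S : Finset E) (k : ℕ) (f : E) : Finset E :=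
  S.filter fun s => G.load S s = 3 * k ∧ ∃ w ∈ G.ends f, G.IsJoinedTo w s

variable {G}

theorem ends_eq_pair {e : E} (he : e ∈ G.edges) {x y : V} (hxy : x ≠ y) (hx : x ∈ G.ends e)
    (hy : y ∈ G.ends e) : G.ends e = {x, y} :=
  (eq_of_subset_of_card_le (insert_subset hx (singleton_subset_iff.mpr hy))
    (by rw [G.card_ends e he, card_pair hxy])).symm

theorem exists_ends_eq_pair {e : E} (he : e ∈ G.edges) {x : V} (hx : x ∈ G.ends e) :
    ∃ y, y ≠ x ∧ G.ends e = {x, y} := by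
  obtain ⟨y, hy, hyx⟩ := exists_mem_ne (by rw [G.card_ends e he]; norm_num) x
  exact ⟨y, hyx, ends_eq_pair he hyx.symm hx hy⟩

theorem Adj.symm {x y : V} (h : G.Adj x y) : G.Adj y x := by
  obtain ⟨e, he, hends⟩ := h
  exact ⟨e, he, by rw [hends, pair_comm]⟩

theorem mem_saturatedNbrs {S : Finset E} {k : ℕ} {f s : E} :
    s ∈ G.saturatedNbrs S k f ↔ s ∈ S ∧ G.load S s = 3 * k ∧ ∃ w ∈ G.ends f, G.IsJoinedTo w s := by
  classical
  simp [saturatedNbrs]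

theorem mem_matched {S : Finset E} {s : E} (hs : s ∈ S) {v : V} (hv : v ∈ G.ends s) :
    v ∈ G.matched S :=
  mem_biUnion.mpr ⟨s, hs, hv⟩

theorem IsMaximumMatching.length_le_of_exchange [DecidableEq E] {S P : Finset E}
    (hS : G.IsMaximumMatching S) (hP : P ⊆ S) (l : List E) (hl : ∀ e ∈ l, e ∈ G.edges)
    (hpw : l.Pairwise (Disjoint on G.ends))
    (havoid : ∀ e ∈ l, ∀ v ∈ G.ends e, v ∉ G.matched S ∨ ∃ p ∈ P, v ∈ G.ends p) :
    l.length ≤ P.card := by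
  have hnodup : l.Nodup :=
    hpw.imp_of_mem fun ha _ hab => ne_of_disjoint_ends (hl _ ha) hab
  rw [← List.toFinset_card_of_nodup hnodup]
  refine hS.card_le_of_exchange hP ⟨fun e he => hl e (List.mem_toFinset.mp he), ?_⟩ ?_
  · intro a ha b hb hab
    exact hpw.forall (List.mem_toFinset.mp ha) (List.mem_toFinset.mp hb) hab
  · intro e he s hs
    obtain ⟨hsS, hsP⟩ := mem_sdiff.mp hs
    refine disjoint_left.mpr fun v hve hvs => ?_
    rcases havoid e (List.mem_toFinset.mp he) v hve with hfree | ⟨p, hp, hvp⟩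
    · exact hfree (mem_matched hsS hvs)
    · exact hsP (hS.1.eq_of_mem_ends hsS (hP hp) hvs hvp ▸ hp)

theorem IsMaximumMatching.not_disjoint_matched {S : Finset E} (hS : G.IsMaximumMatching S)
    {e : E} (he : e ∈ G.edges) : ¬Disjoint (G.ends e) (G.matched S) := by
  classical
  intro hdisj
  have := hS.length_le_of_exchange (empty_subset S) [e] (by simpa using he) (by simp)
    (by simpa using fun v hv => disjoint_left.mp hdisj hv)
  simp at this

theorem sum_degree_eq_sum_card_inter (A : Finset V) :
    ∑ v ∈ A, G.degree v = ∑ e ∈ G.edges, (G.ends e ∩ A).card := by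
  simp only [degree, edgesAt, card_filter]
  rw [sum_comm]
  refine sum_congr rfl fun e _ => ?_
  rw [← card_filter, filter_mem_eq_inter, inter_comm]

theorem IsMatching.pairwiseDisjoint_outEdges {S : Finset E} (hS : G.IsMatching S) :
    (S : Set E).PairwiseDisjoint (G.outEdges S) := by
  intro s hs t ht hst
  refine disjoint_left.mpr fun e hes het => ?_
  simp only [outEdges, mem_filter, not_disjoint_iff] at hes het
  obtain ⟨he, ⟨a, hae, has⟩, hfree⟩ := hes
  obtain ⟨-, ⟨b, hbe, hbt⟩, -⟩ := het
  have hab : a ≠ b := fun h => hst (hS.eq_of_mem_ends hs ht has (h ▸ hbt))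
  rw [ends_eq_pair he hab hae hbe] at hfree
  exact hfree (insert_subset (mem_matched hs has) (singleton_subset_iff.mpr (mem_matched ht hbt)))

namespace IsMaximumMatching

variable {S : Finset E} (hS : G.IsMaximumMatching S)
include hS

theorem biUnion_outEdges [DecidableEq E] :
    S.biUnion (G.outEdges S) = G.edges.filter fun e => ¬G.ends e ⊆ G.matched S := by
  ext e
  simp only [mem_biUnion, outEdges, mem_filter]
  constructor
  · rintro ⟨s, -, he, -, hfree⟩
    exact ⟨he, hfree⟩
  · rintro ⟨he, hfree⟩
    obtain ⟨v, hve, hvS⟩ := not_disjoint_iff.mp (hS.not_disjoint_matched he)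
    obtain ⟨s, hs, hvs⟩ := mem_biUnion.mp hvS
    exact ⟨s, hs, he, not_disjoint_iff.mpr ⟨v, hve, hvs⟩, hfree⟩

theorem card_inter_matched_add {e : E} (he : e ∈ G.edges) :
    (G.ends e ∩ G.matched S).card + (if ¬G.ends e ⊆ G.matched S then 1 else 0) = 2 := by
  split_ifs with hsub
  · rw [inter_eq_left.mpr hsub, G.card_ends e he]
  · have hlt : (G.ends e ∩ G.matched S).card < 2 := by
      rw [← G.card_ends e he]
      exact card_lt_card (ssubset_of_subset_of_ne inter_subset_left
        fun h => hsub (by rw [← h]; exact inter_subset_right))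
    have hpos := card_pos.mpr (not_disjoint_iff_nonempty_inter.mp (hS.not_disjoint_matched he))
    omega

/-- Every edge has one or two ends in `matched S`; charging it to those ends, and once more to the
matching edge at its covered end when it has only one, gives every edge weight two. -/
theorem two_mul_card_edges_eq_sum_load : 2 * G.edges.card = ∑ s ∈ S, G.load S s := by
  classical
  calc 2 * G.edges.card
      = ∑ e ∈ G.edges, ((G.ends e ∩ G.matched S).card +
          if ¬G.ends e ⊆ G.matched S then 1 else 0) := by
        rw [sum_congr rfl fun e he => hS.card_inter_matched_add he, sum_const, smul_eq_mul,
          mul_comm]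
    _ = ∑ v ∈ G.matched S, G.degree v + (S.biUnion (G.outEdges S)).card := by
        rw [sum_add_distrib, sum_degree_eq_sum_card_inter, hS.biUnion_outEdges, card_filter]
    _ = ∑ s ∈ S, G.load S s := by
        rw [matched, sum_biUnion hS.1.2, card_biUnion hS.1.pairwiseDisjoint_outEdges,
          ← sum_add_distrib]
        rfl

end IsMaximumMatching

theorem outEdges_subset_edges {S : Finset E} {s : E} : G.outEdges S s ⊆ G.edges :=
  filter_subset _ _

theorem exists_of_mem_outEdges {S : Finset E} {s e : E}
    (hs : s ∈ S) (he : e ∈ G.outEdges S s) :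
    ∃ a ∈ G.ends s, ∃ y ∉ G.matched S, G.ends e = {a, y} := by
  simp only [outEdges, mem_filter, not_disjoint_iff] at he
  obtain ⟨he, ⟨a, hae, has⟩, hfree⟩ := he
  obtain ⟨y, -, hends⟩ := exists_ends_eq_pair he hae
  refine ⟨a, has, y, fun hy => hfree ?_, hends⟩
  rw [hends]
  exact insert_subset (mem_matched hs has) (singleton_subset_iff.mpr hy)

theorem outEdges_subset_erase [DecidableEq E] {S : Finset E} {s : E} (hs : s ∈ S) {u v : V}
    (hends : G.ends s = {u, v}) (hv : ∀ y ∉ G.matched S, ¬G.Adj v y) :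
    G.outEdges S s ⊆ (G.edgesAt u).erase s := by
  intro e he
  obtain ⟨a, ha, y, hy, hey⟩ := exists_of_mem_outEdges hs he
  have heE : e ∈ G.edges := outEdges_subset_edges he
  rw [hends, mem_insert, mem_singleton] at ha
  rcases ha with rfl | rfl
  · refine mem_erase.mpr ⟨?_, mem_filter.mpr ⟨heE, by simp [hey]⟩⟩
    rintro rfl
    exact hy (mem_matched hs (by simp [hey]))
  · exact absurd ⟨e, heE, hey⟩ (hv y hy)

theorem IsMatching.card_inter_ends_eq [DecidableEq E] {S : Finset E} (hS : G.IsMatching S)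
    {s e : E} (hs : s ∈ S) (he : e ∈ G.edges)
    (hjoin : ∀ f ∈ S, f ≠ s → ∀ w ∈ G.ends f, ¬G.IsJoinedTo w s) :
    (G.ends e ∩ G.ends s).card =
      2 * (if G.ends e = G.ends s then 1 else 0) + (if e ∈ G.outEdges S s then 1 else 0) := by
  by_cases hpar : G.ends e = G.ends s
  · have hout : e ∉ G.outEdges S s := fun h =>
      (mem_filter.mp h).2.2 (hpar ▸ subset_biUnion_of_mem G.ends hs)
    simp [hpar, hout, G.card_ends s (hS.1 hs)]
  by_cases hmeet : Disjoint (G.ends e) (G.ends s)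
  · have hout : e ∉ G.outEdges S s := fun h => (mem_filter.mp h).2.1 hmeet
    simp [hpar, hout, disjoint_iff_inter_eq_empty.mp hmeet]
  obtain ⟨a, hae, has⟩ := not_disjoint_iff.mp hmeet
  obtain ⟨b, hba, hends⟩ := exists_ends_eq_pair he hae
  have hbs : b ∉ G.ends s := fun hbs =>
    hpar (by rw [hends, ends_eq_pair (hS.1 hs) hba.symm has hbs])
  have hinter : G.ends e ∩ G.ends s = {a} := by
    rw [hends, insert_inter_of_mem has, singleton_inter_of_notMem hbs, insert_empty]
  have hout : e ∈ G.outEdges S s := by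
    refine mem_filter.mpr ⟨he, hmeet, fun hsub => ?_⟩
    obtain ⟨f, hf, hbf⟩ := mem_biUnion.mp (hsub (show b ∈ G.ends e by simp [hends]))
    have hfs : f ≠ s := by rintro rfl; exact hbs hbf
    exact hjoin f hf hfs b hbf ⟨a, has, e, he, by rw [hends, pair_comm]⟩
  simp [hpar, hout, hinter]

/-- Each `s ∈ T` is met by an edge `w a` with `a ∈ s`, and distinct `s` give distinct edges. -/
theorem IsMatching.card_le_card_erase_of_isJoinedTo [DecidableEq E] {S : Finset E}
    (hS : G.IsMatching S) {f : E} (hf : f ∈ S) {w : V} (hw : w ∈ G.ends f) {T : Finset E}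
    (hT : T ⊆ S) (hfT : f ∉ T) (hTw : ∀ s ∈ T, G.IsJoinedTo w s) :
    T.card ≤ (((G.edgesAt w).filter fun e => G.ends e ⊆ G.matched S).erase f).card := by
  refine card_le_card_of_forall_subsingleton (fun s e => ¬Disjoint (G.ends e) (G.ends s))
    (fun s hs => ?_) (fun e he => ?_)
  · obtain ⟨a, has, e, he, hends⟩ := hTw s hs
    have haf : a ∉ G.ends f := fun haf =>
      hfT (hS.eq_of_mem_ends (hT hs) hf has haf ▸ hs)
    refine ⟨e, mem_erase.mpr ⟨fun hef => haf (by simp [← hef, hends]),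
      mem_filter.mpr ⟨mem_filter.mpr ⟨he, by simp [hends]⟩, ?_⟩⟩,
      not_disjoint_iff.mpr ⟨a, by simp [hends], has⟩⟩
    rw [hends]
    exact insert_subset (mem_matched hf hw) (singleton_subset_iff.mpr (mem_matched (hT hs) has))
  · have heA := (mem_filter.mp (mem_erase.mp he).2).1
    obtain ⟨c, -, hends⟩ := exists_ends_eq_pair (mem_filter.mp heA).1 (mem_filter.mp heA).2
    have hmeet : ∀ s ∈ T, ¬Disjoint (G.ends e) (G.ends s) → c ∈ G.ends s := by
      intro s hs hes
      obtain ⟨v, hve, hvs⟩ := not_disjoint_iff.mp hes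
      rw [hends, mem_insert, mem_singleton] at hve
      rcases hve with rfl | rfl
      · exact absurd (hS.eq_of_mem_ends (hT hs) hf hvs hw ▸ hs) hfT
      · exact hvs
    rintro s ⟨hs, hes⟩ s' ⟨hs', hes'⟩
    exact hS.eq_of_mem_ends (hT hs) (hT hs') (hmeet s hs hes) (hmeet s' hs' hes')

theorem IsMatching.card_inter_edgesAt_add_card_le [DecidableEq E] {S : Finset E}
    (hS : G.IsMatching S) {f : E} (hf : f ∈ S) {w : V} (hw : w ∈ G.ends f) {T : Finset E}
    (hT : T ⊆ S) (hfT : f ∉ T) (hTw : ∀ s ∈ T, G.IsJoinedTo w s) :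
    (G.outEdges S f ∩ G.edgesAt w).card + T.card + 1 ≤ G.degree w := by
  set A := (G.edgesAt w).filter fun e => G.ends e ⊆ G.matched S
  have hfA : f ∈ A := mem_filter.mpr ⟨mem_filter.mpr ⟨hS.1 hf, hw⟩, subset_biUnion_of_mem _ hf⟩
  have hTA := hS.card_le_card_erase_of_isJoinedTo hf hw hT hfT hTw
  rw [card_erase_of_mem hfA] at hTA
  have hdisj : Disjoint (G.outEdges S f ∩ G.edgesAt w) A :=
    disjoint_left.mpr fun e he heA =>
      (mem_filter.mp (mem_inter.mp he).1).2.2 (mem_filter.mp heA).2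
  have hsub : (G.outEdges S f ∩ G.edgesAt w) ∪ A ⊆ G.edgesAt w :=
    union_subset inter_subset_right (filter_subset _ _)
  have := card_le_card hsub
  rw [card_union_of_disjoint hdisj] at this
  have := card_pos.mpr ⟨f, hfA⟩
  rw [degree]
  omega

namespace IsMaximumMatching

variable [DecidableEq E] {S : Finset E} (hS : G.IsMaximumMatching S)
include hS

/-- Otherwise `x - u - v - y` would be an augmenting path. -/
theorem eq_of_adj_of_adj {s : E} (hs : s ∈ S) {u v : V} (huv : u ≠ v)
    (hends : G.ends s = {u, v}) {x y : V} (hux : G.Adj u x) (hvy : G.Adj v y)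
    (hx : x ∉ G.matched S) (hy : y ∉ G.matched S) : x = y := by
  by_contra hxy
  obtain ⟨e, he, hex⟩ := hux
  obtain ⟨e', he', hey⟩ := hvy
  have hu : u ∈ G.matched S := mem_matched hs (by simp [hends])
  have hv : v ∈ G.matched S := mem_matched hs (by simp [hends])
  have := hS.length_le_of_exchange (singleton_subset_iff.mpr hs) [e, e'] (by simp [he, he'])
    (by simp [onFun, hex, hey]; grind)
    (by simp [hex, hey, hends, hx, hy])
  simp at this

theorem outEdges_subset {s : E} (hs : s ∈ S) {u v : V} (huv : u ≠ v)
    (hends : G.ends s = {u, v}) :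
    G.outEdges S s ⊆ (G.edgesAt u).erase s ∨ G.outEdges S s ⊆ (G.edgesAt v).erase s ∨
      ∃ x ∉ G.matched S, G.Adj u x ∧ G.Adj v x ∧ G.outEdges S s ⊆ G.edgesAt x := by
  by_cases hv : ∃ y ∉ G.matched S, G.Adj v y
  · by_cases hu : ∃ x ∉ G.matched S, G.Adj u x
    · obtain ⟨x, hx, hux⟩ := hu
      obtain ⟨y, hy, hvy⟩ := hv
      obtain rfl := hS.eq_of_adj_of_adj hs huv hends hux hvy hx hy
      refine Or.inr (Or.inr ⟨x, hx, hux, hvy, fun e he => ?_⟩)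
      obtain ⟨a, ha, y, hy, hey⟩ := exists_of_mem_outEdges hs he
      have heE : e ∈ G.edges := outEdges_subset_edges he
      have hay : G.Adj a y := ⟨e, heE, hey⟩
      have hyx : y = x := by
        rw [hends, mem_insert, mem_singleton] at ha
        rcases ha with rfl | rfl
        · exact hS.eq_of_adj_of_adj hs huv hends hay hvy hy hx
        · exact (hS.eq_of_adj_of_adj hs huv hends hux hay hx hy).symm
      exact mem_filter.mpr ⟨heE, by simp [hey, hyx]⟩
    · push Not at hu
      exact Or.inr (Or.inl (outEdges_subset_erase hs (by rw [hends, pair_comm]) hu))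
  · push Not at hv
    exact Or.inl (outEdges_subset_erase hs hends hv)

variable {k : ℕ} (hdeg : ∀ v, G.degree v ≤ k)
include hdeg

theorem load_le {s : E} (hs : s ∈ S) : G.load S s ≤ 3 * k := by
  obtain ⟨u, v, huv, hends⟩ := card_eq_two.mp (G.card_ends s (hS.1.1 hs))
  have hout : (G.outEdges S s).card ≤ k := by
    rcases hS.outEdges_subset hs huv hends with h | h | ⟨x, -, -, -, h⟩
    · exact (card_le_card h).trans (card_erase_le.trans (hdeg u))
    · exact (card_le_card h).trans (card_erase_le.trans (hdeg v))
    · exact (card_le_card h).trans (hdeg x)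
  rw [load, hends, sum_pair huv]
  linarith [hdeg u, hdeg v]

/-- A saturated edge, i.e. one of load `3k`, is the base of a triangle whose apex `x` is free and
sends all its edges to the base. -/
theorem exists_of_load_eq {s : E} (hs : s ∈ S) (hload : G.load S s = 3 * k) {u v : V}
    (huv : u ≠ v) (hends : G.ends s = {u, v}) :
    G.degree u = k ∧ G.degree v = k ∧ ∃ x ∉ G.matched S, G.Adj u x ∧ G.Adj v x ∧
      ∀ y, G.Adj x y → y ∈ G.ends s := by
  rw [load, hends, sum_pair huv] at hload
  have hsu : s ∈ G.edgesAt u := mem_filter.mpr ⟨hS.1.1 hs, by simp [hends]⟩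
  have hsv : s ∈ G.edgesAt v := mem_filter.mpr ⟨hS.1.1 hs, by simp [hends]⟩
  have hu := hdeg u
  have hv := hdeg v
  rcases hS.outEdges_subset hs huv hends with h | h | ⟨x, hx, hux, hvx, h⟩
  · have : (G.outEdges S s).card < G.degree u :=
      (card_le_card h).trans_lt (card_erase_lt_of_mem hsu)
    omega
  · have : (G.outEdges S s).card < G.degree v :=
      (card_le_card h).trans_lt (card_erase_lt_of_mem hsv)
    omega
  have hdx : G.degree x ≤ k := hdeg x
  have hout : (G.outEdges S s).card ≤ G.degree x := card_le_card h
  have hxout : G.edgesAt x = G.outEdges S s :=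
    (eq_of_subset_of_card_le h (by rw [← degree]; omega)).symm
  refine ⟨by omega, by omega, x, hx, hux, hvx, fun y ⟨e, he, hexy⟩ => ?_⟩
  have heout : e ∈ G.outEdges S s := hxout ▸ mem_filter.mpr ⟨he, by simp [hexy]⟩
  obtain ⟨a, hae, has⟩ := not_disjoint_iff.mp (mem_filter.mp heout).2.1
  rw [hexy, mem_insert, mem_singleton] at hae
  rcases hae with rfl | rfl
  · exact absurd (mem_matched hs has) hx
  · exact has

theorem exists_free_adj_of_load_eq {s : E} (hs : s ∈ S) (hload : G.load S s = 3 * k) {a : V}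
    (ha : a ∈ G.ends s) :
    ∃ b ∈ G.ends s, b ≠ a ∧ ∃ x ∉ G.matched S, G.Adj b x ∧ ∀ y, G.Adj x y → y ∈ G.ends s := by
  obtain ⟨b, hba, hends⟩ := exists_ends_eq_pair (hS.1.1 hs) ha
  obtain ⟨-, -, x, hx, -, hbx, hxs⟩ := hS.exists_of_load_eq hdeg hs hload hba.symm hends
  exact ⟨b, by simp [hends], hba, x, hx, hbx, hxs⟩

/-- Parity: if a saturated `s = uv` were joined to no other edge of `S`, every edge meeting `s`
would be parallel to `s` or an out-edge, so `2k = deg u + deg v = 2 · #parallel + k`. -/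
theorem exists_isJoinedTo_of_load_eq (hk : Odd k) {s : E} (hs : s ∈ S)
    (hload : G.load S s = 3 * k) : ∃ f ∈ S, f ≠ s ∧ ∃ w ∈ G.ends f, G.IsJoinedTo w s := by
  classical
  by_contra hnone
  push Not at hnone
  obtain ⟨u, v, huv, hends⟩ := card_eq_two.mp (G.card_ends s (hS.1.1 hs))
  obtain ⟨hu, hv, -⟩ := hS.exists_of_load_eq hdeg hs hload huv hends
  have hsum := sum_degree_eq_sum_card_inter (G := G) (G.ends s)
  rw [sum_congr rfl fun e he => hS.1.card_inter_ends_eq hs he hnone, sum_add_distrib, ← mul_sum,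
    ← card_filter, ← card_filter, filter_mem_eq_inter,
    inter_eq_right.mpr outEdges_subset_edges] at hsum
  rw [load] at hload
  rw [hends, sum_pair huv, hu, hv] at hsum hload
  obtain ⟨j, rfl⟩ := hk
  omega

/-- Otherwise `y - z - w - a - b - x`, with `a` the end of `s` joined to `w` and `x` the apex over
`s`, is an augmenting path. -/
theorem mem_matched_of_isJoinedTo {s : E} (hs : s ∈ S) (hload : G.load S s = 3 * k) {f : E}
    (hf : f ∈ S) (hfs : f ≠ s) {w z : V} (hwz : w ≠ z) (hends : G.ends f = {w, z})
    (hw : G.IsJoinedTo w s) {y : V} (hzy : G.Adj z y) : y ∈ G.matched S := by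
  by_contra hy
  obtain ⟨a, ha, hwa⟩ := hw
  obtain ⟨b, hb, hba, x, hx, hbx, hxs⟩ := hS.exists_free_adj_of_load_eq hdeg hs hload ha
  have hwf : w ∈ G.ends f := by simp [hends]
  have hzf : z ∈ G.ends f := by simp [hends]
  have hsf : ∀ v ∈ G.ends s, v ∉ G.ends f := fun v hvs hvf =>
    hfs (hS.1.eq_of_mem_ends hf hs hvf hvs)
  have hyx : y ≠ x := by
    rintro rfl
    exact hsf z (hxs z hzy.symm) hzf
  have haS := mem_matched hs ha
  have hbS := mem_matched hs hb
  have hwS := mem_matched hf hwf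
  have hzS := mem_matched hf hzf
  obtain ⟨e₁, he₁, h₁⟩ := hbx
  obtain ⟨e₂, he₂, h₂⟩ := hwa
  obtain ⟨e₃, he₃, h₃⟩ := hzy
  have := hS.length_le_of_exchange (P := {s, f}) (insert_subset hs (singleton_subset_iff.mpr hf))
    [e₁, e₂, e₃] (by simp [he₁, he₂, he₃]) (by simp [onFun, h₁, h₂, h₃]; grind)
    (by simp [h₁, h₂, h₃, ha, hb, hwf, hzf, hx, hy])
  exact absurd (this.trans card_le_two) (by simp)

/-- Otherwise `x₁ - b₁ - a₁ - w - z - a₂ - b₂ - x₂` is an augmenting path, where `aᵢ` is the end of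
`sᵢ` joined to `f` and `xᵢ` the apex over `sᵢ`. -/
theorem eq_of_isJoinedTo_of_isJoinedTo {s₁ s₂ : E} (hs₁ : s₁ ∈ S) (hload₁ : G.load S s₁ = 3 * k)
    (hs₂ : s₂ ∈ S) (hload₂ : G.load S s₂ = 3 * k) {f : E} (hf : f ∈ S) (hf₁ : f ≠ s₁)
    (hf₂ : f ≠ s₂) {w z : V} (hwz : w ≠ z) (hends : G.ends f = {w, z})
    (hw : G.IsJoinedTo w s₁) (hz : G.IsJoinedTo z s₂) : s₁ = s₂ := by
  by_contra h₁₂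
  obtain ⟨a₁, ha₁, hwa₁⟩ := hw
  obtain ⟨a₂, ha₂, hza₂⟩ := hz
  obtain ⟨b₁, hb₁, hba₁, x₁, hx₁, hbx₁, hxs₁⟩ :=
    hS.exists_free_adj_of_load_eq hdeg hs₁ hload₁ ha₁
  obtain ⟨b₂, hb₂, hba₂, x₂, hx₂, hbx₂, -⟩ := hS.exists_free_adj_of_load_eq hdeg hs₂ hload₂ ha₂
  have hwf : w ∈ G.ends f := by simp [hends]
  have hzf : z ∈ G.ends f := by simp [hends]
  have hsep : ∀ {t t' : E}, t ∈ S → t' ∈ S → t ≠ t' → ∀ v ∈ G.ends t, v ∉ G.ends t' :=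
    fun ht ht' htt' v hv hv' => htt' (hS.1.eq_of_mem_ends ht ht' hv hv')
  have h₁f := hsep hs₁ hf (Ne.symm hf₁)
  have h₂f := hsep hs₂ hf (Ne.symm hf₂)
  have h₁₂' := hsep hs₁ hs₂ h₁₂
  have hx₁₂ : x₁ ≠ x₂ := by
    rintro rfl
    exact h₁₂' b₂ (hxs₁ b₂ hbx₂.symm) hb₂
  have ha₁S := mem_matched hs₁ ha₁
  have hb₁S := mem_matched hs₁ hb₁
  have ha₂S := mem_matched hs₂ ha₂
  have hb₂S := mem_matched hs₂ hb₂
  have hwS := mem_matched hf hwf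
  have hzS := mem_matched hf hzf
  obtain ⟨e₁, he₁, h₁⟩ := hbx₁
  obtain ⟨e₂, he₂, h₂⟩ := hwa₁
  obtain ⟨e₃, he₃, h₃⟩ := hza₂
  obtain ⟨e₄, he₄, h₄⟩ := hbx₂
  have := hS.length_le_of_exchange (P := {s₁, f, s₂})
    (insert_subset hs₁ (insert_subset hf (singleton_subset_iff.mpr hs₂))) [e₁, e₂, e₃, e₄]
    (by simp [he₁, he₂, he₃, he₄]) (by simp [onFun, h₁, h₂, h₃, h₄]; grind (splits := 40))
    (by simp [h₁, h₂, h₃, h₄, ha₁, hb₁, ha₂, hb₂, hwf, hzf, hx₁, hx₂])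
  exact absurd (this.trans card_le_three) (by simp)

theorem load_add_card_saturatedNbrs_le_of_not_isJoinedTo {f : E} (hf : f ∈ S)
    (hf' : G.load S f ≠ 3 * k) {w z : V} (hwz : w ≠ z) (hends : G.ends f = {w, z})
    (hz : ∀ s ∈ G.saturatedNbrs S k f, ¬G.IsJoinedTo z s) :
    G.load S f + (G.saturatedNbrs S k f).card ≤ 3 * k - 1 := by
  obtain hempty | ⟨s₀, hs₀⟩ := (G.saturatedNbrs S k f).eq_empty_or_nonempty
  · have := hS.load_le hdeg hf
    rw [hempty, card_empty]
    omega
  have hsat : ∀ s ∈ G.saturatedNbrs S k f, s ∈ S ∧ G.load S s = 3 * k := fun s hs =>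
    ⟨(mem_saturatedNbrs.mp hs).1, (mem_saturatedNbrs.mp hs).2.1⟩
  have hjoin : ∀ s ∈ G.saturatedNbrs S k f, G.IsJoinedTo w s := by
    intro s hs
    obtain ⟨v, hv, hvs⟩ := (mem_saturatedNbrs.mp hs).2.2
    rw [hends, mem_insert, mem_singleton] at hv
    rcases hv with rfl | rfl
    · exact hvs
    · exact absurd hvs (hz s hs)
  have hfree : ∀ y ∉ G.matched S, ¬G.Adj z y := fun y hy hzy =>
    hy (hS.mem_matched_of_isJoinedTo hdeg (hsat s₀ hs₀).1 (hsat s₀ hs₀).2 hf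
      (fun h => hf' (h ▸ (hsat s₀ hs₀).2)) hwz hends (hjoin s₀ hs₀) hzy)
  have hout : G.outEdges S f ∩ G.edgesAt w = G.outEdges S f :=
    inter_eq_left.mpr ((outEdges_subset_erase hf hends hfree).trans (erase_subset _ _))
  have hcount := hS.1.card_inter_edgesAt_add_card_le hf (by simp [hends] : w ∈ G.ends f)
    (fun s hs => (hsat s hs).1) (fun hf'' => hf' (hsat f hf'').2) hjoin
  rw [hout] at hcount
  rw [load, hends, sum_pair hwz]
  have := hdeg w
  have := hdeg z
  omega

theorem card_saturatedNbrs_le_one {f : E} (hf : f ∈ S) (hf' : G.load S f ≠ 3 * k) {w z : V}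
    (hwz : w ≠ z) (hends : G.ends f = {w, z}) {s₁ s₂ : E} (hs₁ : s₁ ∈ G.saturatedNbrs S k f)
    (hws₁ : G.IsJoinedTo w s₁) (hs₂ : s₂ ∈ G.saturatedNbrs S k f) (hzs₂ : G.IsJoinedTo z s₂) :
    (G.saturatedNbrs S k f).card ≤ 1 := by
  have hsat : ∀ s ∈ G.saturatedNbrs S k f, s ∈ S ∧ G.load S s = 3 * k ∧ f ≠ s := fun s hs =>
    have h := mem_saturatedNbrs.mp hs
    ⟨h.1, h.2.1, fun hfs => hf' (hfs ▸ h.2.1)⟩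
  obtain ⟨hs₁S, hload₁, hf₁⟩ := hsat s₁ hs₁
  obtain ⟨hs₂S, hload₂, hf₂⟩ := hsat s₂ hs₂
  have h₁₂ := hS.eq_of_isJoinedTo_of_isJoinedTo hdeg hs₁S hload₁ hs₂S hload₂ hf hf₁ hf₂ hwz hends
    hws₁ hzs₂
  have key : ∀ s ∈ G.saturatedNbrs S k f, s = s₂ := by
    intro s hs
    obtain ⟨hsS, hload, hfs⟩ := hsat s hs
    obtain ⟨v, hv, hvs⟩ := (mem_saturatedNbrs.mp hs).2.2
    rw [hends, mem_insert, mem_singleton] at hv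
    rcases hv with rfl | rfl
    · exact hS.eq_of_isJoinedTo_of_isJoinedTo hdeg hsS hload hs₂S hload₂ hf hfs hf₂ hwz hends
        hvs hzs₂
    · exact (hS.eq_of_isJoinedTo_of_isJoinedTo hdeg hs₁S hload₁ hsS hload hf hf₁ hfs hwz hends
        hws₁ hvs).symm.trans h₁₂
  exact card_le_one.mpr fun s hs t ht => (key s hs).trans (key t ht).symm

theorem outEdges_eq_empty_of_isJoinedTo {f : E} (hf : f ∈ S) {w z : V} (hwz : w ≠ z)
    (hends : G.ends f = {w, z}) {s₁ s₂ : E} (hs₁ : s₁ ∈ S) (hload₁ : G.load S s₁ = 3 * k)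
    (hf₁ : f ≠ s₁) (hws₁ : G.IsJoinedTo w s₁) (hs₂ : s₂ ∈ S) (hload₂ : G.load S s₂ = 3 * k)
    (hf₂ : f ≠ s₂) (hzs₂ : G.IsJoinedTo z s₂) : G.outEdges S f = ∅ := by
  refine eq_empty_of_forall_notMem fun e he => ?_
  obtain ⟨a, ha, y, hy, hey⟩ := exists_of_mem_outEdges hf he
  have hay : G.Adj a y := ⟨e, outEdges_subset_edges he, hey⟩
  rw [hends, mem_insert, mem_singleton] at ha
  rcases ha with rfl | rfl
  · exact hy (hS.mem_matched_of_isJoinedTo hdeg hs₂ hload₂ hf hf₂ hwz.symm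
      (by rw [hends, pair_comm]) hzs₂ hay)
  · exact hy (hS.mem_matched_of_isJoinedTo hdeg hs₁ hload₁ hf hf₁ hwz hends hws₁ hay)

theorem load_add_card_saturatedNbrs_le {f : E} (hf : f ∈ S) (hf' : G.load S f ≠ 3 * k) :
    G.load S f + (G.saturatedNbrs S k f).card ≤ 3 * k - 1 := by
  obtain ⟨w, z, hwz, hends⟩ := card_eq_two.mp (G.card_ends f (hS.1.1 hf))
  by_cases hz : ∀ s ∈ G.saturatedNbrs S k f, ¬G.IsJoinedTo z s
  · exact hS.load_add_card_saturatedNbrs_le_of_not_isJoinedTo hdeg hf hf' hwz hends hz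
  by_cases hw : ∀ s ∈ G.saturatedNbrs S k f, ¬G.IsJoinedTo w s
  · exact hS.load_add_card_saturatedNbrs_le_of_not_isJoinedTo hdeg hf hf' hwz.symm
      (by rw [hends, pair_comm]) hw
  push Not at hz hw
  obtain ⟨s₁, hs₁, hws₁⟩ := hw
  obtain ⟨s₂, hs₂, hzs₂⟩ := hz
  obtain ⟨hs₁S, hload₁, -⟩ := mem_saturatedNbrs.mp hs₁
  obtain ⟨hs₂S, hload₂, -⟩ := mem_saturatedNbrs.mp hs₂
  have hf₁ : f ≠ s₁ := fun h => hf' (h ▸ hload₁)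
  have hf₂ : f ≠ s₂ := fun h => hf' (h ▸ hload₂)
  have hcard := hS.card_saturatedNbrs_le_one hdeg hf hf' hwz hends hs₁ hws₁ hs₂ hzs₂
  have hout := hS.outEdges_eq_empty_of_isJoinedTo hdeg hf hwz hends hs₁S hload₁ hf₁ hws₁ hs₂S
    hload₂ hf₂ hzs₂
  have hdegw := hS.1.card_inter_edgesAt_add_card_le hf (by simp [hends] : w ∈ G.ends f)
    (singleton_subset_iff.mpr hs₁S) (by simpa using hf₁) (by simpa using hws₁)
  rw [card_singleton] at hdegw
  rw [load, hends, sum_pair hwz, hout, card_empty]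
  have := hdeg w
  have := hdeg z
  omega

theorem exists_mem_saturatedNbrs (hk : Odd k) {s : E} (hs : s ∈ S) (hload : G.load S s = 3 * k) :
    ∃ f ∈ S, G.load S f ≠ 3 * k ∧ s ∈ G.saturatedNbrs S k f := by
  obtain ⟨f, hf, hfs, w, hw, hws⟩ := hS.exists_isJoinedTo_of_load_eq hdeg hk hs hload
  refine ⟨f, hf, fun hloadf => ?_, mem_saturatedNbrs.mpr ⟨hs, hload, w, hw, hws⟩⟩
  obtain ⟨z, hz, hzw, y, hy, hzy, -⟩ := hS.exists_free_adj_of_load_eq hdeg hf hloadf hw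
  exact hy (hS.mem_matched_of_isJoinedTo hdeg hs hload hf hfs hzw.symm
    (ends_eq_pair (hS.1.1 hf) hzw.symm hw hz) hws hzy)

/-- Each saturated edge of load `3k` is charged to an unsaturated edge joined to it, whose load
is low enough to absorb the charge. -/
theorem sum_load_le_of_odd (hk : Odd k) : ∑ s ∈ S, G.load S s ≤ (3 * k - 1) * S.card := by
  classical
  set T := S.filter fun s => G.load S s = 3 * k
  set U := S.filter fun s => ¬G.load S s = 3 * k
  have hsplit : ∑ s ∈ T, G.load S s + ∑ s ∈ U, G.load S s = ∑ s ∈ S, G.load S s :=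
    sum_filter_add_sum_filter_not _ _ _
  have hcard : T.card + U.card = S.card := card_filter_add_card_filter_not _
  have hT : ∑ s ∈ T, G.load S s = 3 * k * T.card := by
    rw [sum_congr rfl fun s hs => (mem_filter.mp hs).2, sum_const, smul_eq_mul, mul_comm]
  have hcover : T.card ≤ ∑ f ∈ U, (G.saturatedNbrs S k f).card := by
    refine (card_le_card fun s hs => ?_).trans card_biUnion_le
    obtain ⟨f, hf, hf', hsf⟩ :=
      hS.exists_mem_saturatedNbrs hdeg hk (mem_filter.mp hs).1 (mem_filter.mp hs).2
    exact mem_biUnion.mpr ⟨f, mem_filter.mpr ⟨hf, hf'⟩, hsf⟩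
  have hU : ∑ f ∈ U, (G.load S f + (G.saturatedNbrs S k f).card) ≤ (3 * k - 1) * U.card := by
    rw [mul_comm, ← smul_eq_mul, ← sum_const]
    exact sum_le_sum fun f hf => hS.load_add_card_saturatedNbrs_le hdeg (mem_filter.mp hf).1
      (mem_filter.mp hf).2
  rw [sum_add_distrib] at hU
  have hmul : 3 * k * T.card = (3 * k - 1) * T.card + T.card := by
    rw [← add_one_mul, Nat.sub_add_cancel (by obtain ⟨j, rfl⟩ := hk; omega)]
  rw [← hsplit, ← hcard, hT, mul_add]
  omega

end IsMaximumMatching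

theorem exists_isMatching_card_edges_le [DecidableEq E] {k : ℕ} (hdeg : ∀ v, G.degree v ≤ k) :
    ∃ S, G.IsMatching S ∧ G.edges.card ≤ 3 * k / 2 * S.card := by
  obtain ⟨S, hS⟩ := exists_isMaximumMatching (G := G)
  refine ⟨S, hS.1, ?_⟩
  have hsum := hS.two_mul_card_edges_eq_sum_load
  rcases Nat.even_or_odd k with ⟨j, rfl⟩ | ⟨j, rfl⟩
  · have := sum_le_sum fun s hs => hS.load_le hdeg hs
    rw [sum_const, smul_eq_mul] at this
    rw [show 3 * (j + j) / 2 = 3 * j by omega]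
    nlinarith
  · have := hS.sum_load_le_of_odd hdeg (odd_two_mul_add_one j)
    rw [show 3 * (2 * j + 1) / 2 = 3 * j + 1 by omega]
    rw [show 3 * (2 * j + 1) - 1 = 2 * (3 * j + 1) by omega] at this
    nlinarith

end FinMultigraph

namespace FinHypergraph

variable {V : Type*} [DecidableEq V]

/-- The vertices of degree two, as edges joining the two hyperedges that contain them. -/
def degreeTwoGraph (H : FinHypergraph V) : FinMultigraph (Fin H.numEdges) V where
  edges := H.verts.filter fun v => H.degree v = 2
  ends v := univ.filter fun i => v ∈ H.edge i
  card_ends _ hv := (mem_filter.mp hv).2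

theorem edges_degreeTwoGraph (H : FinHypergraph V) :
    H.degreeTwoGraph.edges = H.verts.filter fun v => H.degree v = 2 :=
  rfl

theorem degree_degreeTwoGraph_le (H : FinHypergraph V) (i : Fin H.numEdges) :
    H.degreeTwoGraph.degree i ≤ (H.edge i).card :=
  card_le_card fun v hv => by
    simp only [FinMultigraph.edgesAt, degreeTwoGraph, mem_filter,
      mem_univ, true_and] at hv
    exact hv.2

theorem sum_degree (H : FinHypergraph V) : ∑ v ∈ H.verts, H.degree v = ∑ i, (H.edge i).card := by
  simp only [degree, card_filter]
  rw [sum_comm]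
  refine sum_congr rfl fun i _ => ?_
  rw [← card_filter, filter_mem_eq_inter, inter_eq_right.mpr (H.edge_sub i)]

theorem card_add_card_filter_degree_eq_two (H : FinHypergraph V)
    (hdeg : ∀ v ∈ H.verts, H.degree v = 1 ∨ H.degree v = 2) :
    H.verts.card + (H.verts.filter fun v => H.degree v = 2).card = ∑ v ∈ H.verts, H.degree v := by
  rw [card_eq_sum_ones, card_filter, ← sum_add_distrib]
  refine sum_congr rfl fun v hv => ?_
  rcases hdeg v hv with h | h <;> simp [h]

theorem tau_le_card {H : FinHypergraph V} {T : Finset V} (hT : H.IsTransversal T) :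
    H.tau ≤ T.card :=
  Nat.sInf_le ⟨T, hT, rfl⟩

/-- A matching `S` of degree-two vertices meets `2|S|` hyperedges; one more vertex for each of the
others gives a transversal. -/
theorem tau_add_card_le {H : FinHypergraph V} (hne : ∀ i, (H.edge i).Nonempty) {S : Finset V}
    (hS : H.degreeTwoGraph.IsMatching S) : H.tau + S.card ≤ H.numEdges := by
  set G := H.degreeTwoGraph
  have hSV : S ⊆ H.verts := fun v hv => (mem_filter.mp (hS.1 hv)).1
  have hcovered : (G.matched S).card = 2 * S.card := by
    rw [FinMultigraph.matched, card_biUnion hS.2, sum_congr rfl fun v hv => G.card_ends v (hS.1 hv),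
      sum_const, smul_eq_mul, mul_comm]
  set T := S ∪ (univ \ G.matched S).image fun i => (hne i).choose
  have hT : H.IsTransversal T := by
    refine ⟨union_subset hSV fun v hv => ?_, fun i => ?_⟩
    · obtain ⟨i, -, rfl⟩ := mem_image.mp hv
      exact H.edge_sub i (hne i).choose_spec
    · by_cases hi : i ∈ G.matched S
      · obtain ⟨v, hv, hvi⟩ := mem_biUnion.mp hi
        exact ⟨v, mem_inter.mpr ⟨mem_union_left _ hv, (mem_filter.mp hvi).2⟩⟩
      · exact ⟨_, mem_inter.mpr ⟨mem_union_right _ (mem_image_of_mem _ (by simp [hi])),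
          (hne i).choose_spec⟩⟩
  have hTcard : T.card ≤ S.card + (univ \ G.matched S).card :=
    (card_union_le _ _).trans (add_le_add_right card_image_le _)
  rw [card_sdiff_of_subset (subset_univ _), card_univ, Fintype.card_fin, hcovered] at hTcard
  have := card_le_univ (G.matched S)
  rw [Fintype.card_fin, hcovered] at this
  have := tau_le_card hT
  omega

end FinHypergraph

/-- For `k ≥ 2`, a `k`-uniform hypergraph on `n` vertices with `m` edges in
which every vertex has degree `1` or `2` has exactly `k·m - n` vertices of
degree `2`, and consequently satisfies
`τ(H) ≤ (n + ⌊k/2⌋·m)/⌊3k/2⌋` (for `k` even and `k` odd alike). -/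
theorem stmt16 {V : Type*} [DecidableEq V] (k n m : ℕ) (hk : 2 ≤ k)
    (H : FinHypergraph V) (huni : H.Uniform k)
    (hn : H.verts.card = n) (hm : H.numEdges = m)
    (hdeg : ∀ v ∈ H.verts, H.degree v = 1 ∨ H.degree v = 2) :
    (H.verts.filter fun v => H.degree v = 2).card = k * m - n ∧
      (H.tau : ℚ) ≤ ((n : ℚ) + ((k / 2 : ℕ) : ℚ) * (m : ℚ)) / ((3 * k / 2 : ℕ) : ℚ) := by
  subst hn hm
  have hcount :
      H.verts.card + (H.verts.filter fun v => H.degree v = 2).card = k * H.numEdges := by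
    rw [H.card_add_card_filter_degree_eq_two hdeg, H.sum_degree, sum_congr rfl fun i _ => huni i]
    simp [mul_comm]
  refine ⟨by omega, ?_⟩
  obtain ⟨S, hS, hW⟩ := H.degreeTwoGraph.exists_isMatching_card_edges_le
    fun i => (H.degree_degreeTwoGraph_le i).trans (huni i).le
  rw [H.edges_degreeTwoGraph] at hW
  have htau := FinHypergraph.tau_add_card_le (fun i => card_pos.mp (by rw [huni i]; omega)) hS
  have hmain : 3 * k / 2 * H.tau ≤ H.verts.card + k / 2 * H.numEdges := by
    have := Nat.mul_le_mul_left (3 * k / 2) htau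
    rw [show 3 * k / 2 = k + k / 2 by omega] at this hW ⊢
    nlinarith
  rw [le_div_iff₀ (Nat.cast_pos.mpr (by omega)), mul_comm]
  exact_mod_cast hmain
end

section
/- For k ≥ 2 and d ∈ {2, 3}, let H be a connected k-uniform hypergraph in which every vertex has degree 1 or 2, and let G be the multigraph whose vertices are the edges of H and which has one edge joining e and f for every degree-2 vertex of H contained in both e and f. If G is a Shannon multigraph of degree k, then H is isomorphic to the generalized triangle T_k. -/
/-- A multigraph: a finite vertex set together with symmetric, loopless
edge multiplicities supported on the vertex set. -/
structure Multigraph (V : Type*) where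
  verts : Finset V
  mult : V → V → ℕ
  symm : ∀ u v, mult u v = mult v u
  loopless : ∀ v, mult v v = 0
  supp : ∀ u v, mult u v ≠ 0 → u ∈ verts ∧ v ∈ verts

namespace Multigraph

variable {V : Type*}

/-- The number of edges of `G` (counted with multiplicity). -/
def edgeCount (G : Multigraph V) : ℕ :=
  (∑ u ∈ G.verts, ∑ v ∈ G.verts, G.mult u v) / 2

/-- The degree of a vertex: the sum of the multiplicities of edges at it. -/
def degree (G : Multigraph V) (v : V) : ℕ :=
  ∑ u ∈ G.verts, G.mult v u

/-- The maximum degree `Δ(G)`. -/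
def maxDegree (G : Multigraph V) : ℕ :=
  G.verts.sup G.degree

/-- A matching: a set of edges (each recorded as an ordered pair of its
endpoints, present in the multigraph) that pairwise share no endpoint. -/
def IsMatching (G : Multigraph V) (M : Finset (V × V)) : Prop :=
  (∀ p ∈ M, 0 < G.mult p.1 p.2) ∧
    ∀ p ∈ M, ∀ q ∈ M, p ≠ q →
      p.1 ≠ q.1 ∧ p.1 ≠ q.2 ∧ p.2 ≠ q.1 ∧ p.2 ≠ q.2

/-- The matching number `α'(G)`: the maximum size of a matching. -/
noncomputable def matchingNumber (G : Multigraph V) : ℕ :=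
  sSup {n | ∃ M : Finset (V × V), G.IsMatching M ∧ M.card = n}

/-- `G` is connected if every pair of vertices is joined by a path. -/
def Connected (G : Multigraph V) : Prop :=
  ∀ u ∈ G.verts, ∀ v ∈ G.verts,
    Relation.ReflTransGen (fun a b => 0 < G.mult a b) u v

/-- `G` is a Shannon multigraph of degree `d`: three vertices `x, y, z` with
`μ(xy) = μ(xz) = ⌊d/2⌋` and `μ(yz) = ⌈d/2⌉`. -/
def IsShannon [DecidableEq V] (G : Multigraph V) (d : ℕ) : Prop :=
  ∃ x y z : V, x ≠ y ∧ x ≠ z ∧ y ≠ z ∧ G.verts = {x, y, z} ∧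
    G.mult x y = d / 2 ∧ G.mult x z = d / 2 ∧ G.mult y z = (d + 1) / 2

/-- A proper edge coloring of `G` with colors from `Fin c`: each pair of
vertices receives a set of colors of size equal to its multiplicity (one color
per parallel edge, so parallel edges get distinct colors), symmetrically, and
edges sharing an endpoint get disjoint color sets. -/
def IsProperEdgeColoring (G : Multigraph V) {c : ℕ}
    (f : V → V → Finset (Fin c)) : Prop :=
  (∀ u v, f u v = f v u) ∧ (∀ u v, (f u v).card = G.mult u v) ∧
    ∀ u v w, v ≠ w → Disjoint (f u v) (f u w)

/-- The chromatic index `χ'(G)`: minimum number of colors in a proper edge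
coloring. -/
noncomputable def chromaticIndex (G : Multigraph V) : ℕ :=
  sInf {c | ∃ f : V → V → Finset (Fin c), G.IsProperEdgeColoring f}

/-- The number of edges of `G` receiving color `i` in the coloring `f`. -/
def colorClassSize (G : Multigraph V) {c : ℕ}
    (f : V → V → Finset (Fin c)) (i : Fin c) : ℕ :=
  (∑ u ∈ G.verts, ∑ v ∈ G.verts, if i ∈ f u v then 1 else 0) / 2

end Multigraph

/-! The multigraph `G` is Shannon of degree `k`, so `H` has exactly three edges `x, y, z`.
Since every vertex has degree at most two, no vertex lies in all three edges and
`μ(ij) = |e_i ∩ e_j|`. Put `A = e_y ∩ e_z`, `B = e_x ∩ e_y`, `C = e_x ∩ e_z`; these are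
pairwise disjoint, and `|A| + |B| = |A| + |C| = k` forces `e_y = A ∪ B` and `e_z = A ∪ C`.
The rest `D = e_x \ (B ∪ C)` has `k - 2⌊k/2⌋ = ⌈k/2⌉ - ⌊k/2⌋` elements, and since every vertex
lies in some edge, `V(H) = A ∪ B ∪ C ∪ D`. -/

theorem Finset.eq_union_of_card_le_add {α : Type*} [DecidableEq α] {s t u : Finset α}
    (hs : s ⊆ u) (ht : t ⊆ u) (hst : Disjoint s t) (hcard : u.card ≤ s.card + t.card) :
    u = s ∪ t :=
  (Finset.eq_of_subset_of_card_le (Finset.union_subset hs ht)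
    (by rwa [Finset.card_union_of_disjoint hst])).symm

namespace FinHypergraph

variable {V : Type*}

theorem coe_ofFn_edge_of_univ_eq {H : FinHypergraph V} {x y z : Fin H.numEdges}
    (hxy : x ≠ y) (hxz : x ≠ z) (hyz : y ≠ z)
    (huniv : (Finset.univ : Finset (Fin H.numEdges)) = {x, y, z}) :
    (List.ofFn H.edge : Multiset (Finset V)) = {H.edge x, H.edge y, H.edge z} := by
  rw [← Fin.univ_val_map, huniv, Finset.insert_val_of_notMem (by simp [hxy, hxz]),
    Finset.insert_val_of_notMem (by simpa using hyz)]
  rfl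

variable [DecidableEq V] (H : FinHypergraph V)

theorem card_le_degree {s : Finset (Fin H.numEdges)} {v : V} (hs : ∀ i ∈ s, v ∈ H.edge i) :
    s.card ≤ H.degree v :=
  Finset.card_le_card fun i hi => Finset.mem_filter.2 ⟨Finset.mem_univ i, hs i hi⟩

theorem exists_mem_edge_of_degree_pos {v : V} (hv : 0 < H.degree v) : ∃ i, v ∈ H.edge i := by
  obtain ⟨i, hi⟩ := Finset.card_pos.1 hv
  exact ⟨i, (Finset.mem_filter.1 hi).2⟩

theorem verts_eq_biUnion_edge (hpos : ∀ v ∈ H.verts, 0 < H.degree v) :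
    H.verts = Finset.univ.biUnion H.edge := by
  refine Finset.Subset.antisymm (fun v hv => ?_) (Finset.biUnion_subset.2 fun i _ => H.edge_sub i)
  obtain ⟨i, hi⟩ := H.exists_mem_edge_of_degree_pos (hpos v hv)
  exact Finset.mem_biUnion.2 ⟨i, Finset.mem_univ i, hi⟩

variable {H}

theorem degree_eq_two_of_mem_edge (hmax : ∀ v ∈ H.verts, H.degree v ≤ 2)
    {i j : Fin H.numEdges} (hij : i ≠ j) {v : V} (hi : v ∈ H.edge i) (hj : v ∈ H.edge j) :
    H.degree v = 2 := by
  have h := H.card_le_degree (v := v) (s := {i, j}) (by simp [hi, hj])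
  rw [Finset.card_pair hij] at h
  exact le_antisymm (hmax v (H.edge_sub i hi)) h

theorem disjoint_inter_edge (hmax : ∀ v ∈ H.verts, H.degree v ≤ 2)
    {i j l : Fin H.numEdges} (hij : i ≠ j) (hil : i ≠ l) (hjl : j ≠ l) :
    Disjoint (H.edge i ∩ H.edge j) (H.edge l) := by
  refine Finset.disjoint_left.2 fun v hv hl => ?_
  obtain ⟨hi, hj⟩ := Finset.mem_inter.1 hv
  have h := H.card_le_degree (v := v) (s := {i, j, l}) (by simp [hi, hj, hl])
  rw [Finset.card_insert_of_notMem (by simp [hij, hil]), Finset.card_pair hjl] at h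
  have := hmax v (H.edge_sub i hi)
  omega

theorem filter_degree_eq_two_eq_inter (hmax : ∀ v ∈ H.verts, H.degree v ≤ 2)
    {i j : Fin H.numEdges} (hij : i ≠ j) :
    H.verts.filter (fun v => H.degree v = 2 ∧ v ∈ H.edge i ∧ v ∈ H.edge j) =
      H.edge i ∩ H.edge j := by
  ext v
  simp only [Finset.mem_filter, Finset.mem_inter]
  exact ⟨fun h => h.2.2, fun ⟨hi, hj⟩ =>
    ⟨H.edge_sub i hi, degree_eq_two_of_mem_edge hmax hij hi hj, hi, hj⟩⟩

theorem isTk_of_univ_eq {k : ℕ} (huni : H.Uniform k)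
    (hpos : ∀ v ∈ H.verts, 0 < H.degree v) (hmax : ∀ v ∈ H.verts, H.degree v ≤ 2)
    {x y z : Fin H.numEdges} (hxy : x ≠ y) (hxz : x ≠ z) (hyz : y ≠ z)
    (huniv : (Finset.univ : Finset (Fin H.numEdges)) = {x, y, z})
    (hA : (H.edge y ∩ H.edge z).card = (k + 1) / 2) (hB : (H.edge x ∩ H.edge y).card = k / 2)
    (hC : (H.edge x ∩ H.edge z).card = k / 2) :
    H.IsTk k := by
  set A := H.edge y ∩ H.edge z
  set B := H.edge x ∩ H.edge y
  set C := H.edge x ∩ H.edge z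
  set D := H.edge x \ (B ∪ C)
  have hAx : Disjoint A (H.edge x) := disjoint_inter_edge hmax hyz hxy.symm hxz.symm
  have hAB : Disjoint A B := hAx.mono_right Finset.inter_subset_left
  have hAC : Disjoint A C := hAx.mono_right Finset.inter_subset_left
  have hAD : Disjoint A D := hAx.mono_right Finset.sdiff_subset
  have hBC : Disjoint B C :=
    (disjoint_inter_edge hmax hxy hxz hyz).mono_right Finset.inter_subset_right
  have hBCx : B ∪ C ⊆ H.edge x :=
    Finset.union_subset Finset.inter_subset_left Finset.inter_subset_left
  have hy : H.edge y = A ∪ B := Finset.eq_union_of_card_le_add Finset.inter_subset_left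
    Finset.inter_subset_right hAB (by rw [huni y, hA, hB]; omega)
  have hz : H.edge z = A ∪ C := Finset.eq_union_of_card_le_add Finset.inter_subset_right
    Finset.inter_subset_right hAC (by rw [huni z, hA, hC]; omega)
  have hx : H.edge x = B ∪ C ∪ D := (Finset.union_sdiff_of_subset hBCx).symm
  have hD : D.card = (k + 1) / 2 - k / 2 := by
    rw [Finset.card_sdiff_of_subset hBCx, Finset.card_union_of_disjoint hBC, hB, hC, huni x]
    omega
  have hverts : H.verts = A ∪ B ∪ C ∪ D := by
    rw [H.verts_eq_biUnion_edge hpos, huniv, Finset.biUnion_insert, Finset.biUnion_insert,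
      Finset.singleton_biUnion, hx, hy, hz]
    ext v
    simp only [Finset.mem_union]
    tauto
  have hnum : H.numEdges = 3 := by
    rw [← Fintype.card_fin H.numEdges, ← Finset.card_univ, huniv,
      Finset.card_insert_of_notMem (by simp [hxy, hxz]), Finset.card_pair hyz]
  have hedges : (List.ofFn H.edge : Multiset (Finset V)) = {A ∪ B, A ∪ C, B ∪ C ∪ D} := by
    rw [← hx, ← hy, ← hz, coe_ofFn_edge_of_univ_eq hyz hxy.symm hxz.symm
      (by rw [huniv]; ext; simp only [Finset.mem_insert, Finset.mem_singleton]; tauto)]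
  exact ⟨A, B, C, D, hA, hB, hC, hD, hAB, hAC, hAD, hBC,
    Finset.disjoint_sdiff.mono_left Finset.subset_union_left,
    Finset.disjoint_sdiff.mono_left Finset.subset_union_right, hverts, hnum, hedges⟩

end FinHypergraph

theorem stmt17_general {V : Type*} [DecidableEq V] (k : ℕ)
    (H : FinHypergraph V) (huni : H.Uniform k)
    (hdeg : ∀ v ∈ H.verts, H.degree v = 1 ∨ H.degree v = 2)
    (G : Multigraph (Fin H.numEdges))
    (hGv : G.verts = Finset.univ)
    (hGm : ∀ i j, i ≠ j → G.mult i j =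
      (H.verts.filter fun v =>
        H.degree v = 2 ∧ v ∈ H.edge i ∧ v ∈ H.edge j).card)
    (hShannon : G.IsShannon k) :
    H.IsTk k := by
  obtain ⟨x, y, z, hxy, hxz, hyz, hGverts, hmxy, hmxz, hmyz⟩ := hShannon
  have hpos : ∀ v ∈ H.verts, 0 < H.degree v := fun v hv => by
    rcases hdeg v hv with h | h <;> omega
  have hmax : ∀ v ∈ H.verts, H.degree v ≤ 2 := fun v hv => by
    rcases hdeg v hv with h | h <;> omega
  have hmult : ∀ {i j}, i ≠ j → G.mult i j = (H.edge i ∩ H.edge j).card := fun hij => by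
    rw [hGm _ _ hij, FinHypergraph.filter_degree_eq_two_eq_inter hmax hij]
  exact FinHypergraph.isTk_of_univ_eq huni hpos hmax hxy hxz hyz (hGv ▸ hGverts)
    (hmult hyz ▸ hmyz) (hmult hxy ▸ hmxy) (hmult hxz ▸ hmxz)

/-- For `k ≥ 2` (and `d ∈ {2, 3}`), let `H` be a connected `k`-uniform
hypergraph in which every vertex has degree `1` or `2`, and let `G` be the
multigraph whose vertices are the edges of `H`, with one edge joining `e` and
`f` for every degree-`2` vertex of `H` lying in both `e` and `f`. If `G` is a
Shannon multigraph of degree `k`, then `H` is (isomorphic to) the generalized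
triangle `T_k`. -/
theorem stmt17 {V : Type*} [DecidableEq V] (k d : ℕ) (hk : 2 ≤ k)
    (hd : d = 2 ∨ d = 3)
    (H : FinHypergraph V) (huni : H.Uniform k) (hconn : H.Connected)
    (hdeg : ∀ v ∈ H.verts, H.degree v = 1 ∨ H.degree v = 2)
    (G : Multigraph (Fin H.numEdges))
    (hGv : G.verts = Finset.univ)
    (hGm : ∀ i j, i ≠ j → G.mult i j =
      (H.verts.filter fun v =>
        H.degree v = 2 ∧ v ∈ H.edge i ∧ v ∈ H.edge j).card)
    (hShannon : G.IsShannon k) :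
    H.IsTk k :=
  stmt17_general k H huni hdeg G hGv hGm hShannon
end
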